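/- arXiv:math-ph/0509022 — 3 statements merged into one kernel-verified Lean document; each statement's English description precedes it below -/
import Mathlib

section
/- For q ≥ 1 and p ≥ 0, the determinant Δ_q(p) of the (q+1)×(q+1) matrix with entries 1/(j+k+p+1), j,k = 0,…,q, satisfies the recursion Δ_q(p) = (q!)² / ((p+2q+1) ∏_{r=0}^{q−1}(p+q+r+1)²) · Δ_{q−1}(p), with Δ_0(p) = 1/(p+1). -/
/-!
The shifted Hilbert matrix is the Cauchy matrix `(x_j + y_k)⁻¹` with `x_j = j + p + 1`, `y_k = k`.
For any Cauchy matrix, the Schur complement of its last diagonal entry is again the smaller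
Cauchy matrix, with row `i` scaled by `(x_n - x_i)/(x_i + y_n)` and column `j` by
`(y_n - y_j)/(x_n + y_j)`. For the Hilbert data both scaling products are
`q! / ∏_{r<q} (p + q + r + 1)`, and the pivot is `1/(p + 2q + 1)`.
-/

open Matrix Finset

theorem Matrix.det_succ_eq_mul_det_castSucc {R : Type*} [CommRing R] {n : ℕ}
    (A : Matrix (Fin (n + 1)) (Fin (n + 1)) R)
    (hA : ∀ i : Fin n, A i.castSucc (Fin.last n) = 0) :
    A.det = A (Fin.last n) (Fin.last n) * (A.submatrix Fin.castSucc Fin.castSucc).det := by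
  rw [det_succ_column A (Fin.last n), Finset.sum_eq_single (Fin.last n)]
  · simp [Fin.succAbove_last, ← two_mul]
  · intro i _ hi
    obtain ⟨i, rfl⟩ := Fin.exists_castSucc_eq.mpr hi
    simp [hA]
  · simp

theorem prod_range_natCast_sub_self {R : Type*} [CommRing R] (n : ℕ) :
    ∏ i ∈ range n, ((n : R) - i) = n.factorial := by
  rw [prod_range_natCast_sub, ← Nat.descFactorial_eq_prod_range, Nat.descFactorial_self]

section Cauchy

variable {K : Type*} [Field K]

def cauchyMatrix {m : Type*} (x y : m → K) : Matrix m m K := of fun i j => (x i + y j)⁻¹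

theorem inv_add_sub_div_mul_inv_add {a b c d : K} (hac : a + c ≠ 0) (had : a + d ≠ 0)
    (hbc : b + c ≠ 0) :
    (a + c)⁻¹ - (b + d) / (a + d) * (b + c)⁻¹
      = (b - a) / (a + d) * ((d - c) / (b + c)) * (a + c)⁻¹ := by
  field_simp
  ring

theorem det_cauchyMatrix_succ {n : ℕ} (x y : Fin (n + 1) → K) (hxy : ∀ i j, x i + y j ≠ 0) :
    (cauchyMatrix x y).det
      = (x (Fin.last n) + y (Fin.last n))⁻¹
        * (∏ i : Fin n, (x (Fin.last n) - x i.castSucc) / (x i.castSucc + y (Fin.last n)))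
        * (∏ j : Fin n, (y (Fin.last n) - y j.castSucc) / (x (Fin.last n) + y j.castSucc))
        * (cauchyMatrix (x ∘ Fin.castSucc) (y ∘ Fin.castSucc)).det := by
  set l := Fin.last n
  -- Clearing the last column by row operations leaves the Schur complement of the pivot.
  let c : Fin (n + 1) → K := Fin.lastCases 0 fun i => (x l + y l) / (x i.castSucc + y l)
  let B : Matrix (Fin (n + 1)) (Fin (n + 1)) K :=
    of fun i j => cauchyMatrix x y i j - c i * cauchyMatrix x y l j
  have hB : (cauchyMatrix x y).det = B.det :=
    (det_eq_of_forall_row_eq_smul_add_const (fun i => -c i) l (by simp [c, l])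
      fun i j => by simp [B, sub_eq_add_neg]).symm
  have hB_last : ∀ i : Fin n, B i.castSucc l = 0 := fun i => by
    simp only [B, c, l, cauchyMatrix, of_apply, Fin.lastCases_castSucc]
    rw [inv_add_sub_div_mul_inv_add (hxy _ _) (hxy _ _) (hxy _ _), sub_self, zero_div,
      mul_zero, zero_mul]
  have hB_sub : B.submatrix Fin.castSucc Fin.castSucc
      = of fun i j => (x l - x i.castSucc) / (x i.castSucc + y l) *
          (of fun i j => (y l - y j.castSucc) / (x l + y j.castSucc) *
            cauchyMatrix (x ∘ Fin.castSucc) (y ∘ Fin.castSucc) i j) i j := by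
    ext i j
    simp only [B, c, l, cauchyMatrix, submatrix_apply, of_apply, Fin.lastCases_castSucc,
      Function.comp_apply]
    rw [inv_add_sub_div_mul_inv_add (hxy _ _) (hxy _ _) (hxy _ _), mul_assoc]
  rw [hB, det_succ_eq_mul_det_castSucc B hB_last, hB_sub, det_mul_column, det_mul_row]
  simp [B, c, l, cauchyMatrix, mul_assoc]

end Cauchy

theorem hilbert_eq_cauchyMatrix (p n : ℕ) :
    (of fun j k : Fin n => (1 : ℝ) / ((j : ℕ) + (k : ℕ) + p + 1))
      = cauchyMatrix (fun j : Fin n => ((j : ℕ) : ℝ) + p + 1) (fun k => ((k : ℕ) : ℝ)) := by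
  ext j k
  simp only [cauchyMatrix, of_apply, one_div]
  ring_nf

theorem hilbert_cauchy_factor_eq (p q : ℕ) :
    ((q : ℝ) + p + 1 + q)⁻¹
        * (∏ i : Fin q, ((q : ℝ) + p + 1 - ((i : ℕ) + p + 1)) / ((i : ℕ) + p + 1 + q))
        * (∏ j : Fin q, ((q : ℝ) - (j : ℕ)) / (q + p + 1 + (j : ℕ)))
      = (q.factorial : ℝ) ^ 2 / (((p : ℝ) + 2 * q + 1)
          * ∏ r ∈ range q, ((p : ℝ) + q + r + 1) ^ 2) := by
  rw [Fin.prod_univ_eq_prod_range (fun i => ((q : ℝ) + p + 1 - (i + p + 1)) / (i + p + 1 + q)),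
    Fin.prod_univ_eq_prod_range (fun j => ((q : ℝ) - j) / (q + p + 1 + j)),
    prod_div_distrib, prod_div_distrib, prod_pow, prod_range_natCast_sub_self]
  have hnum : ∏ i ∈ range q, ((q : ℝ) + p + 1 - (i + p + 1)) = q.factorial := by
    rw [← prod_range_natCast_sub_self]
    exact prod_congr rfl fun _ _ => by ring
  have hden₁ : ∏ i ∈ range q, ((i : ℝ) + p + 1 + q) = ∏ r ∈ range q, ((p : ℝ) + q + r + 1) :=
    prod_congr rfl fun _ _ => by ring
  have hden₂ : ∏ i ∈ range q, ((q : ℝ) + p + 1 + i) = ∏ r ∈ range q, ((p : ℝ) + q + r + 1) :=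
    prod_congr rfl fun _ _ => by ring
  rw [hnum, hden₁, hden₂, show (q : ℝ) + p + 1 + q = p + 2 * q + 1 by ring]
  simp only [div_eq_mul_inv, mul_inv]
  ring

theorem hilbert_type_det_recursion_general (q p : ℕ) :
    (Matrix.det (Matrix.of fun j k : Fin (q + 1) =>
        (1 : ℝ) / ((j : ℕ) + (k : ℕ) + p + 1))
      = ((q.factorial : ℝ)) ^ 2
          / (((p : ℝ) + 2 * q + 1)
              * ∏ r ∈ Finset.range q, ((p : ℝ) + q + r + 1) ^ 2)
          * Matrix.det (Matrix.of fun j k : Fin q =>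
              (1 : ℝ) / ((j : ℕ) + (k : ℕ) + p + 1)))
    ∧ Matrix.det (Matrix.of fun j k : Fin 1 =>
        (1 : ℝ) / ((j : ℕ) + (k : ℕ) + p + 1)) = 1 / ((p : ℝ) + 1) := by
  refine ⟨?_, by simp⟩
  have hpos : ∀ j k : Fin (q + 1), ((j : ℕ) : ℝ) + p + 1 + (k : ℕ) ≠ 0 :=
    fun _ _ => by positivity
  rw [hilbert_eq_cauchyMatrix, hilbert_eq_cauchyMatrix, det_cauchyMatrix_succ _ _ hpos]
  simp only [Fin.val_last, Fin.val_castSucc, Function.comp_def]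
  rw [hilbert_cauchy_factor_eq]

theorem hilbert_type_det_recursion (q p : ℕ) (hq : 1 ≤ q) :
    (Matrix.det (Matrix.of fun j k : Fin (q + 1) =>
        (1 : ℝ) / ((j : ℕ) + (k : ℕ) + p + 1))
      = ((q.factorial : ℝ)) ^ 2
          / (((p : ℝ) + 2 * q + 1)
              * ∏ r ∈ Finset.range q, ((p : ℝ) + q + r + 1) ^ 2)
          * Matrix.det (Matrix.of fun j k : Fin q =>
              (1 : ℝ) / ((j : ℕ) + (k : ℕ) + p + 1)))
    ∧ Matrix.det (Matrix.of fun j k : Fin 1 =>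
        (1 : ℝ) / ((j : ℕ) + (k : ℕ) + p + 1)) = 1 / ((p : ℝ) + 1) :=
  hilbert_type_det_recursion_general q p
end

section
/- For q ≥ 1 and p ≥ 0, the determinant Δ_q(p) of the (q+1)×(q+1) matrix with entries 1/(j+k+p+1), j,k = 0,…,q, satisfies Δ_q(p) ≥ ∏_{r=0}^q (r!)² / (p+2q+1)^{(q+1)²}. -/
/-!
With `x i = i` and `y j = j + p + 1` the matrix is the Cauchy matrix `(1 / (x i + y j))`, whose
determinant is `V(x) V(y) / ∏ i j, (x i + y j)` with `V` the Vandermonde determinant. Eliminating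
the first row and column shows this: the Schur complement of the `(0, 0)` entry of a Cauchy matrix
is again a Cauchy matrix, with its rows and columns rescaled. Both Vandermonde determinants
are the superfactorial `∏ r ≤ q, r!`, and each of the `(q + 1)²` factors `i + j + p + 1` of the
denominator is at most `p + 2q + 1`.
-/

open Finset Matrix Nat

namespace Matrix

variable {K : Type*} [Field K] {n : ℕ}

theorem det_succ_eq_mul_det_schur (A : Matrix (Fin (n + 1)) (Fin (n + 1)) K) (h : A 0 0 ≠ 0) :
    A.det =
      A 0 0 * (of fun i j : Fin n => A i.succ j.succ - A i.succ 0 * A 0 j.succ / A 0 0).det := by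
  set c : Fin (n + 1) → K := Fin.cons 0 fun i => A i.succ 0 / A 0 0
  set B : Matrix (Fin (n + 1)) (Fin (n + 1)) K := of fun i j => A i j - c i * A 0 j
  have hB : A.det = B.det :=
    det_eq_of_forall_row_eq_smul_add_const c 0 rfl fun i j => by simp [B, c]
  have hB0 : ∀ i : Fin n, B i.succ 0 = 0 := fun i => by simp [B, c, h]
  rw [hB, det_succ_column_zero, Fin.sum_univ_succ]
  simp only [hB0, mul_zero, zero_mul, sum_const_zero, add_zero, Fin.succAbove_zero]
  have hB00 : B 0 0 = A 0 0 := by simp [B, c]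
  rw [Fin.val_zero, pow_zero, one_mul, hB00]
  congr 2
  ext i j
  simp [B, c, div_mul_eq_mul_div]

theorem det_vandermonde_succ {R : Type*} [CommRing R] (v : Fin (n + 1) → R) :
    (vandermonde v).det =
      (∏ i : Fin n, (v i.succ - v 0)) * (vandermonde fun i => v i.succ).det := by
  simp only [det_vandermonde, Fin.prod_univ_succ, Fin.prod_Ioi_zero, Fin.prod_Ioi_succ]

theorem det_cauchy_succ (x y : Fin (n + 1) → K) (h : ∀ i j, x i + y j ≠ 0) :
    (of fun i j => (x i + y j)⁻¹).det =
      (x 0 + y 0)⁻¹ * (∏ i : Fin n, (x i.succ - x 0) / (x i.succ + y 0)) *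
        (∏ j : Fin n, (y j.succ - y 0) / (x 0 + y j.succ)) *
          (of fun i j : Fin n => (x i.succ + y j.succ)⁻¹).det := by
  rw [det_succ_eq_mul_det_schur _ (by simpa using h 0 0)]
  have hschur : ∀ i j : Fin n,
      (x i.succ + y j.succ)⁻¹ - (x i.succ + y 0)⁻¹ * (x 0 + y j.succ)⁻¹ / (x 0 + y 0)⁻¹ =
        (x i.succ - x 0) / (x i.succ + y 0) *
          ((y j.succ - y 0) / (x 0 + y j.succ) * (x i.succ + y j.succ)⁻¹) := by
    intro i j
    field_simp [h]
    ring
  simp only [of_apply, hschur, mul_assoc]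
  rw [← det_mul_row, ← det_mul_column]
  rfl

theorem det_cauchy (x y : Fin n → K) (h : ∀ i j, x i + y j ≠ 0) :
    (of fun i j => (x i + y j)⁻¹).det =
      (vandermonde x).det * (vandermonde y).det / ∏ i, ∏ j, (x i + y j) := by
  induction n with
  | zero => simp
  | succ n ih =>
    rw [det_cauchy_succ x y h, ih _ _ fun i j => h _ _, det_vandermonde_succ x,
      det_vandermonde_succ y]
    simp only [Fin.prod_univ_succ, prod_mul_distrib, prod_div_distrib]
    field_simp [h]

end Matrix

theorem hilbert_type_det_lower_bound_general (q p : ℕ) :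
    (∏ r ∈ Finset.range (q + 1), ((r.factorial : ℝ)) ^ 2)
        / ((p : ℝ) + 2 * q + 1) ^ ((q + 1) ^ 2)
      ≤ Matrix.det (Matrix.of fun j k : Fin (q + 1) =>
          (1 : ℝ) / ((j : ℕ) + (k : ℕ) + p + 1)) := by
  have hentry : ∀ j k : Fin (q + 1),
      (1 : ℝ) / ((j : ℕ) + (k : ℕ) + p + 1) = ((j : ℝ) + ((k : ℝ) + (p + 1)))⁻¹ := fun j k => by
    rw [one_div, add_assoc, add_assoc]
  have hpos : ∀ j k : Fin (q + 1), 0 < (j : ℝ) + ((k : ℝ) + (p + 1)) := fun j k => by positivity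
  have hle : ∀ j k : Fin (q + 1), (j : ℝ) + ((k : ℝ) + (p + 1)) ≤ p + 2 * q + 1 := fun j k => by
    have hj : (j : ℝ) ≤ q := by exact_mod_cast j.is_le
    have hk : (k : ℝ) ≤ q := by exact_mod_cast k.is_le
    linarith
  have hnum : ∏ r ∈ range (q + 1), ((r ! : ℕ) : ℝ) ^ 2 = (sf q : ℝ) * (sf q : ℝ) := by
    rw [prod_pow, ← Nat.cast_prod, prod_range_succ_factorial, sq]
  have hden : ∏ j : Fin (q + 1), ∏ k : Fin (q + 1), ((j : ℝ) + ((k : ℝ) + (p + 1))) ≤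
      ((p : ℝ) + 2 * q + 1) ^ ((q + 1) ^ 2) := by
    calc _ ≤ ∏ _j : Fin (q + 1), ∏ _k : Fin (q + 1), ((p : ℝ) + 2 * q + 1) :=
          prod_le_prod (fun j _ => prod_nonneg fun k _ => (hpos j k).le) fun j _ =>
            prod_le_prod (fun k _ => (hpos j k).le) fun k _ => hle j k
      _ = _ := by simp [sq, pow_mul]
  simp only [hentry]
  rw [det_cauchy _ _ fun j k => (hpos j k).ne', det_vandermonde_add,
    det_vandermonde_id_eq_superFactorial, hnum]
  exact div_le_div_of_nonneg_left (by positivity)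
    (prod_pos fun j _ => prod_pos fun k _ => hpos j k) hden

theorem hilbert_type_det_lower_bound (q p : ℕ) (hq : 1 ≤ q) :
    (∏ r ∈ Finset.range (q + 1), ((r.factorial : ℝ)) ^ 2)
        / ((p : ℝ) + 2 * q + 1) ^ ((q + 1) ^ 2)
      ≤ Matrix.det (Matrix.of fun j k : Fin (q + 1) =>
          (1 : ℝ) / ((j : ℕ) + (k : ℕ) + p + 1)) :=
  hilbert_type_det_lower_bound_general q p
end

section
/- Let M and M̃ be (q+1)×(q+1) matrices with entries M_{jk} = ∫_0^ρ s^{j+k+p} e^{−s} ds and M̃_{jk} = ∫_0^ρ s^{j+k+p} ds = ρ^{j+k+p+1}/(j+k+p+1), where ρ > 0 and p ∈ ℤ≥0. Then det M ≥ e^{−(q+1)ρ} det M̃. -/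
/-!
On `(0, ρ)` both matrices are moment matrices `∫ s ^ (j + k + p) w(s) ds`, i.e. Gram matrices of
the functions `s ^ (j + p / 2)` in `L²(w ds)`: the left-hand matrix, scaled by `e^{-ρ}`, has the
constant weight `e^{-ρ}`, the right-hand one the weight `e^{-s}`. Their difference has the weight
`e^{-s} - e^{-ρ} ≥ 0`, so it is positive semidefinite, and the determinant is monotone for the
Loewner order: if `0 ≤ A ≤ B` with `A` invertible, then `A^{-1/2} B A^{-1/2} ≥ 1` has all its
eigenvalues `≥ 1`.
-/

open MeasureTheory Set Matrix Real
open scoped ComplexOrder MatrixOrder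

namespace Matrix

variable {ι α 𝕜 : Type*} [Fintype ι] [RCLike 𝕜]

theorem posSemidef_of_integral_conj_mul [MeasurableSpace α] (μ : Measure α) {f : ι → α → 𝕜}
    (hf : ∀ i, MemLp (f i) 2 μ) :
    (of fun i j ↦ ∫ x, starRingEnd 𝕜 (f i x) * f j x ∂μ).PosSemidef := by
  convert posSemidef_gram 𝕜 fun i ↦ (hf i).toLp (f i) using 1
  ext i j
  rw [gram_apply, L2.inner_def, of_apply]
  refine integral_congr_ae ?_
  filter_upwards [(hf i).coeFn_toLp, (hf j).coeFn_toLp] with x hi hj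
  rw [hi, hj, RCLike.inner_apply']

variable [DecidableEq ι]

theorem one_le_det_of_one_le {X : Matrix ι ι 𝕜} (hX : 1 ≤ X) : 1 ≤ X.det := by
  have hX' : X.IsHermitian := (IsSelfAdjoint.of_nonneg (zero_le_one.trans hX)).isHermitian
  have hspec := (CFC.one_le_iff (R := ℝ) X hX'.isSelfAdjoint).1 hX
  rw [hX'.det_eq_prod_eigenvalues]
  exact Finset.one_le_prod fun i _ ↦ by
    exact_mod_cast hspec _ (hX'.eigenvalues_mem_spectrum_real i)

theorem det_le_det_of_le {A B : Matrix ι ι 𝕜} (hA : 0 ≤ A) (hAB : A ≤ B) : A.det ≤ B.det := by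
  by_cases hdet : A.det = 0
  · exact hdet ▸ (hA.trans hAB).posSemidef.det_nonneg
  have hA₀ : 0 ≤ A.det := hA.posSemidef.det_nonneg
  set S := CFC.sqrt A
  have hSS : S * S = A := CFC.sqrt_mul_sqrt_self A hA
  have hS : IsUnit S.det := by
    rw [isUnit_iff_ne_zero]
    rintro h
    exact hdet (by rw [← hSS, det_mul, h, zero_mul])
  have hSAS : S⁻¹ * A * S⁻¹ = 1 := by
    rw [← hSS, ← mul_assoc, nonsing_inv_mul _ hS, one_mul, mul_nonsing_inv _ hS]
  have hSBS : 1 ≤ (S⁻¹ * B * S⁻¹).det :=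
    one_le_det_of_one_le (hSAS ▸ (IsSelfAdjoint.of_nonneg
      (CFC.sqrt_nonneg A).posSemidef.inv.nonneg).conjugate_le_conjugate hAB)
  have hSdet : S⁻¹.det * S⁻¹.det = A.det⁻¹ := by
    refine eq_inv_of_mul_eq_one_left ?_
    rw [← det_one (n := ι) (R := 𝕜), ← hSAS, det_mul, det_mul]
    ring
  rw [det_mul, det_mul, mul_right_comm, hSdet] at hSBS
  calc A.det = A.det * 1 := (mul_one _).symm
    _ ≤ A.det * (A.det⁻¹ * B.det) := by gcongr
    _ = B.det := by rw [← mul_assoc, mul_inv_cancel₀ hdet, one_mul]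

end Matrix

noncomputable def momentMatrix (n p : ℕ) (ρ : ℝ) (w : ℝ → ℝ) : Matrix (Fin n) (Fin n) ℝ :=
  of fun j k ↦ ∫ s in 0..ρ, s ^ ((j : ℕ) + (k : ℕ) + p) * w s

section momentMatrix

variable {n p : ℕ} {ρ : ℝ}

theorem posSemidef_momentMatrix {w : ℝ → ℝ} (hρ : 0 ≤ ρ) (hw : IntervalIntegrable w volume 0 ρ)
    (hw₀ : ∀ s ∈ Ioc 0 ρ, 0 ≤ w s) : (momentMatrix n p ρ w).PosSemidef := by
  set f : Fin n → ℝ → ℝ := fun j s ↦ s ^ (j : ℕ) * √(s ^ p * w s)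
  have hf_mul : ∀ j k, ∀ s ∈ Ioc 0 ρ, f j s * f k s = s ^ ((j : ℕ) + (k : ℕ) + p) * w s := by
    intro j k s hs
    have : 0 ≤ s ^ p * w s := mul_nonneg (pow_nonneg hs.1.le p) (hw₀ s hs)
    rw [mul_mul_mul_comm, mul_self_sqrt this, pow_add, pow_add]
    ring
  have hf : ∀ j, MemLp (f j) 2 (volume.restrict (Ioc 0 ρ)) := by
    intro j
    have hw' := (intervalIntegrable_iff_integrableOn_Ioc_of_le hρ).1 hw
    refine (memLp_two_iff_integrable_sq ?_).2 ?_
    · exact (continuous_pow _).aestronglyMeasurable.mul (continuous_sqrt.comp_aestronglyMeasurable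
        ((continuous_pow p).aestronglyMeasurable.mul hw'.aestronglyMeasurable))
    · have hint : IntegrableOn (fun s ↦ s ^ ((j : ℕ) + (j : ℕ) + p) * w s) (Ioc 0 ρ) :=
        (intervalIntegrable_iff_integrableOn_Ioc_of_le hρ).1 (hw.continuousOn_mul (by fun_prop))
      refine hint.congr_fun_ae ?_
      filter_upwards [ae_restrict_mem measurableSet_Ioc] with s hs
      rw [sq, hf_mul j j s hs]
  have hM : momentMatrix n p ρ w =
      of fun j k ↦ ∫ s in Ioc 0 ρ, starRingEnd ℝ (f j s) * f k s := by
    ext j k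
    rw [momentMatrix, of_apply, of_apply, intervalIntegral.integral_of_le hρ]
    exact setIntegral_congr_fun measurableSet_Ioc fun s hs ↦ (hf_mul j k s hs).symm
  exact hM ▸ posSemidef_of_integral_conj_mul _ hf

theorem momentMatrix_sub {w₁ w₂ : ℝ → ℝ} (hw₁ : IntervalIntegrable w₁ volume 0 ρ)
    (hw₂ : IntervalIntegrable w₂ volume 0 ρ) :
    momentMatrix n p ρ w₁ - momentMatrix n p ρ w₂ = momentMatrix n p ρ (w₁ - w₂) := by
  ext j k
  simp only [momentMatrix, Matrix.sub_apply, of_apply, Pi.sub_apply, mul_sub]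
  exact (intervalIntegral.integral_sub (hw₁.continuousOn_mul (by fun_prop))
    (hw₂.continuousOn_mul (by fun_prop))).symm

theorem momentMatrix_const (c : ℝ) : momentMatrix n p ρ (fun _ ↦ c) =
    c • of fun j k : Fin n ↦
      ρ ^ ((j : ℕ) + (k : ℕ) + p + 1) / (((j : ℕ) + (k : ℕ) + p + 1 : ℕ) : ℝ) := by
  ext j k
  rw [momentMatrix, of_apply, Matrix.smul_apply, of_apply, smul_eq_mul,
    intervalIntegral.integral_mul_const, integral_pow, zero_pow (Nat.succ_ne_zero _)]
  push_cast
  ring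

end momentMatrix

theorem gram_det_exp_comparison (q p : ℕ) (ρ : ℝ) (hρ : 0 < ρ) :
    Real.exp (-((q : ℝ) + 1) * ρ)
        * Matrix.det (Matrix.of fun j k : Fin (q + 1) =>
            ρ ^ ((j : ℕ) + (k : ℕ) + p + 1) / (((j : ℕ) + (k : ℕ) + p + 1 : ℕ) : ℝ))
      ≤ Matrix.det (Matrix.of fun j k : Fin (q + 1) =>
          ∫ s in (0:ℝ)..ρ, s ^ ((j : ℕ) + (k : ℕ) + p) * Real.exp (-s)) := by
  have hexp : Continuous fun s ↦ exp (-s) := by fun_prop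
  have hle : momentMatrix (q + 1) p ρ (fun _ ↦ exp (-ρ)) ≤
      momentMatrix (q + 1) p ρ (fun s ↦ exp (-s)) := by
    rw [le_iff, momentMatrix_sub (hexp.intervalIntegrable _ _) intervalIntegrable_const]
    exact posSemidef_momentMatrix hρ.le ((hexp.sub continuous_const).intervalIntegrable _ _)
      fun s hs ↦ sub_nonneg.2 (exp_le_exp.2 (neg_le_neg hs.2))
  calc _ = (momentMatrix (q + 1) p ρ fun _ ↦ exp (-ρ)).det := by
        rw [momentMatrix_const, det_smul, Fintype.card_fin, ← exp_nat_mul]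
        congr 2
        push_cast
        ring
    _ ≤ _ := det_le_det_of_le
        (posSemidef_momentMatrix hρ.le intervalIntegrable_const fun _ _ ↦ (exp_pos _).le).nonneg hle
end
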